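/- arXiv:1011.3077 — 9 statements merged into one kernel-verified Lean document; each statement's English description precedes it below -/
import Mathlib

section
/- Let A be an n×n Hermitian matrix partitioned in block 2×2 form as A = [[A₁₁, A₂₁ᴴ], [A₂₁, A₂₂]], where A₁₁ and A₂₂ are square diagonal blocks. Then ‖A₂₁‖₂ ≤ (λ_max(A) − λ_min(A))/2, where λ_max(A) and λ_min(A) are the largest and smallest eigenvalues of A. -/
/-!
Let `λ₊ = λ_max(A)` and `λ₋ = λ_min(A)`, so that `λ₋ ≤ A ≤ λ₊` in the Loewner order. For unit
vectors `x` supported on the first block and `y` on the second, `x ± y` have norm `√2`, and the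
Rayleigh quotient bounds give
`4 Re ⟪y, A x⟫ = Re ⟪x + y, A (x + y)⟫ - Re ⟪x - y, A (x - y)⟫ ≤ 2 λ₊ - 2 λ₋`.
Since `⟪y, A x⟫ = ⟪y, A₂₁ x⟫`, this bounds `‖A₂₁‖` by `(λ₊ - λ₋) / 2`.
-/

open Matrix

/-- The spectral norm (largest singular value) of a complex matrix: the operator
norm of the induced linear map between Euclidean spaces. -/
noncomputable def matSpectralNorm {m n : Type*} [Fintype m] [Fintype n] [DecidableEq n]
    (M : Matrix m n ℂ) : ℝ :=
  ‖LinearMap.toContinuousLinearMap (Matrix.toEuclideanLin M)‖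

open RCLike InnerProductSpace

section InnerProductSpace

variable {𝕜 E : Type*} [RCLike 𝕜] [NormedAddCommGroup E] [InnerProductSpace 𝕜 E]

theorem LinearMap.IsSymmetric.four_mul_re_inner_le_of_inner_eq_zero {T : E →ₗ[𝕜] E}
    (hT : T.IsSymmetric) {m M : ℝ} (hm : ∀ z, m * ‖z‖ ^ 2 ≤ re ⟪z, T z⟫_𝕜)
    (hM : ∀ z, re ⟪z, T z⟫_𝕜 ≤ M * ‖z‖ ^ 2) {x y : E} (hxy : ⟪x, y⟫_𝕜 = 0) :
    4 * re ⟪y, T x⟫_𝕜 ≤ (M - m) * (‖x‖ ^ 2 + ‖y‖ ^ 2) := by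
  have hsymm : re ⟪x, T y⟫_𝕜 = re ⟪y, T x⟫_𝕜 := by rw [← hT, inner_re_symm]
  have hplus : re ⟪x + y, T (x + y)⟫_𝕜
      = re ⟪x, T x⟫_𝕜 + 2 * re ⟪y, T x⟫_𝕜 + re ⟪y, T y⟫_𝕜 := by
    simp only [map_add, inner_add_left, inner_add_right]
    linarith
  have hminus : re ⟪x - y, T (x - y)⟫_𝕜
      = re ⟪x, T x⟫_𝕜 - 2 * re ⟪y, T x⟫_𝕜 + re ⟪y, T y⟫_𝕜 := by
    simp only [map_sub, inner_sub_left, inner_sub_right]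
    linarith
  have hnorm_add : ‖x + y‖ ^ 2 = ‖x‖ ^ 2 + ‖y‖ ^ 2 := by
    rw [@norm_add_sq 𝕜, hxy, map_zero]; ring
  have hnorm_sub : ‖x - y‖ ^ 2 = ‖x‖ ^ 2 + ‖y‖ ^ 2 := by
    rw [@norm_sub_sq 𝕜, hxy, map_zero]; ring
  calc 4 * re ⟪y, T x⟫_𝕜 = re ⟪x + y, T (x + y)⟫_𝕜 - re ⟪x - y, T (x - y)⟫_𝕜 := by
        rw [hplus, hminus]; ring
    _ ≤ M * ‖x + y‖ ^ 2 - m * ‖x - y‖ ^ 2 := sub_le_sub (hM _) (hm _)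
    _ = (M - m) * (‖x‖ ^ 2 + ‖y‖ ^ 2) := by rw [hnorm_add, hnorm_sub]; ring

end InnerProductSpace

section RayleighBounds

open scoped MatrixOrder

variable {𝕜 : Type*} [RCLike 𝕜] {n : Type*} [Fintype n] [DecidableEq n] {A : Matrix n n 𝕜}

theorem Matrix.toEuclideanLin_algebraMap_apply (c : ℝ) (z : EuclideanSpace 𝕜 n) :
    toEuclideanLin (algebraMap ℝ (Matrix n n 𝕜) c) z = c • z := by
  ext i
  simp [toLpLin_apply, algebraMap_eq_diagonal, mulVec_diagonal, Pi.algebraMap_apply,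
    RCLike.real_smul_eq_coe_mul]

theorem Matrix.re_inner_toEuclideanLin_algebraMap (c : ℝ) (z : EuclideanSpace 𝕜 n) :
    re ⟪z, toEuclideanLin (algebraMap ℝ (Matrix n n 𝕜) c) z⟫_𝕜 = c * ‖z‖ ^ 2 := by
  rw [toEuclideanLin_algebraMap_apply, inner_smul_right_eq_smul, RCLike.smul_re,
    inner_self_eq_norm_sq]

theorem Matrix.re_inner_toEuclideanLin_le_of_le_algebraMap {c : ℝ}
    (h : A ≤ algebraMap ℝ _ c) (z : EuclideanSpace 𝕜 n) :
    re ⟪z, toEuclideanLin A z⟫_𝕜 ≤ c * ‖z‖ ^ 2 := by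
  have hpos := (isPositive_toEuclideanLin_iff.mpr h).re_inner_nonneg_right z
  rw [map_sub, LinearMap.sub_apply, inner_sub_right, map_sub,
    re_inner_toEuclideanLin_algebraMap] at hpos
  linarith

theorem Matrix.le_re_inner_toEuclideanLin_of_algebraMap_le {c : ℝ}
    (h : algebraMap ℝ _ c ≤ A) (z : EuclideanSpace 𝕜 n) :
    c * ‖z‖ ^ 2 ≤ re ⟪z, toEuclideanLin A z⟫_𝕜 := by
  have hpos := (isPositive_toEuclideanLin_iff.mpr h).re_inner_nonneg_right z
  rw [map_sub, LinearMap.sub_apply, inner_sub_right, map_sub,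
    re_inner_toEuclideanLin_algebraMap] at hpos
  linarith

namespace Matrix.IsHermitian

theorem le_algebraMap_iSup_eigenvalues (hA : A.IsHermitian) :
    A ≤ algebraMap ℝ _ (⨆ i, hA.eigenvalues i) := by
  refine le_algebraMap_of_spectrum_le ?_ hA.isSelfAdjoint
  rw [hA.spectrum_real_eq_range_eigenvalues]
  rintro _ ⟨i, rfl⟩
  exact le_ciSup (Set.finite_range _).bddAbove i

theorem algebraMap_iInf_eigenvalues_le (hA : A.IsHermitian) :
    algebraMap ℝ _ (⨅ i, hA.eigenvalues i) ≤ A := by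
  refine algebraMap_le_of_le_spectrum ?_ hA.isSelfAdjoint
  rw [hA.spectrum_real_eq_range_eigenvalues]
  rintro _ ⟨i, rfl⟩
  exact ciInf_le (Set.finite_range _).bddBelow i

-- For `n` empty both sides are the junk value `0`.
theorem iInf_eigenvalues_le_iSup_eigenvalues (hA : A.IsHermitian) :
    ⨅ i, hA.eigenvalues i ≤ ⨆ i, hA.eigenvalues i := by
  rcases isEmpty_or_nonempty n with _ | _
  · simp [Real.iSup_of_isEmpty, Real.iInf_of_isEmpty]
  · exact ciInf_le_ciSup (Set.finite_range _).bddBelow (Set.finite_range _).bddAbove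

theorem four_mul_re_inner_le_of_inner_eq_zero (hA : A.IsHermitian) {x y : EuclideanSpace 𝕜 n}
    (hxy : ⟪x, y⟫_𝕜 = 0) :
    4 * re ⟪y, toEuclideanLin A x⟫_𝕜 ≤
      ((⨆ i, hA.eigenvalues i) - ⨅ i, hA.eigenvalues i) * (‖x‖ ^ 2 + ‖y‖ ^ 2) :=
  (isSymmetric_toEuclideanLin_iff.mpr hA).four_mul_re_inner_le_of_inner_eq_zero
    (le_re_inner_toEuclideanLin_of_algebraMap_le hA.algebraMap_iInf_eigenvalues_le)
    (re_inner_toEuclideanLin_le_of_le_algebraMap hA.le_algebraMap_iSup_eigenvalues) hxy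

end Matrix.IsHermitian

end RayleighBounds

section Blocks

variable {𝕜 : Type*} [RCLike 𝕜] {ι κ : Type*} [Fintype ι] [Fintype κ]

namespace EuclideanSpace

def inl (x : EuclideanSpace 𝕜 ι) : EuclideanSpace 𝕜 (ι ⊕ κ) := WithLp.toLp 2 (Sum.elim x.ofLp 0)

def inr (y : EuclideanSpace 𝕜 κ) : EuclideanSpace 𝕜 (ι ⊕ κ) := WithLp.toLp 2 (Sum.elim 0 y.ofLp)

@[simp]
theorem norm_inl (x : EuclideanSpace 𝕜 ι) : ‖(inl x : EuclideanSpace 𝕜 (ι ⊕ κ))‖ = ‖x‖ := by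
  simp [EuclideanSpace.norm_eq, inl, Fintype.sum_sum_type]

@[simp]
theorem norm_inr (y : EuclideanSpace 𝕜 κ) : ‖(inr y : EuclideanSpace 𝕜 (ι ⊕ κ))‖ = ‖y‖ := by
  simp [EuclideanSpace.norm_eq, inr, Fintype.sum_sum_type]

theorem inner_inl_inr (x : EuclideanSpace 𝕜 ι) (y : EuclideanSpace 𝕜 κ) :
    ⟪inl x, inr y⟫_𝕜 = 0 := by
  simp [PiLp.inner_apply, inl, inr, Fintype.sum_sum_type]

end EuclideanSpace

theorem Matrix.inner_inr_toEuclideanLin_inl [DecidableEq ι] [DecidableEq κ]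
    (A : Matrix (ι ⊕ κ) (ι ⊕ κ) 𝕜) (x : EuclideanSpace 𝕜 ι) (y : EuclideanSpace 𝕜 κ) :
    ⟪EuclideanSpace.inr y, toEuclideanLin A (EuclideanSpace.inl x)⟫_𝕜 =
      ⟪y, toEuclideanLin A.toBlocks₂₁ x⟫_𝕜 := by
  rw [← fromBlocks_toBlocks A]
  simp [PiLp.inner_apply, EuclideanSpace.inl, EuclideanSpace.inr, toLpLin_apply,
    fromBlocks_mulVec, Fintype.sum_sum_type]

end Blocks

/-- If a Hermitian matrix `A` is partitioned in block 2×2 form with square diagonal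
blocks, then the spectral norm of the off-diagonal block `A₂₁` is at most
`(λ_max(A) − λ_min(A))/2`. -/
theorem offdiag_block_norm_le_eigenvalue_spread {n₁ n₂ : ℕ}
    (A : Matrix (Fin n₁ ⊕ Fin n₂) (Fin n₁ ⊕ Fin n₂) ℂ)
    (hA : A.IsHermitian) :
    matSpectralNorm A.toBlocks₂₁ ≤
      ((⨆ i, hA.eigenvalues i) - (⨅ i, hA.eigenvalues i)) / 2 := by
  have hspread := hA.iInf_eigenvalues_le_iSup_eigenvalues
  refine ContinuousLinearMap.opNorm_le_of_re_inner_le (by linarith) fun x y hx hy => ?_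
  have h := hA.four_mul_re_inner_le_of_inner_eq_zero (EuclideanSpace.inner_inl_inr x y)
  rw [inner_inr_toEuclideanLin_inl, EuclideanSpace.norm_inl, EuclideanSpace.norm_inr, hx, hy] at h
  rw [LinearMap.coe_toContinuousLinearMap', inner_re_symm]
  linarith
end

section
/- Let A_j and B_j be invertible n×n complex matrices. Suppose Q is a 2n×2n unitary matrix, partitioned into n×n blocks Q = [[Q₁₁, Q₁₂], [Q₂₁, Q₂₂]], and R_j is an n×n matrix such that the 2n×n block matrix [B_j; −A_j] equals Q·[R_j; 0]. Define A_{j+1} = Q₁₂ᴴ·A_j and B_{j+1} = Q₂₂ᴴ·B_j. If Q₁₂ is invertible, then A_{j+1} is invertible and A_{j+1}⁻¹·B_{j+1} = (A_j⁻¹·B_j)². -/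
/-!
Since `Q` is unitary, `Qᴴ [Bⱼ; −Aⱼ] = [Rⱼ; 0]`, and the zero second block row reads
`Q₁₂ᴴ Bⱼ = Q₂₂ᴴ Aⱼ`. Hence `(Q₁₂ᴴ)⁻¹ Q₂₂ᴴ = Bⱼ Aⱼ⁻¹`, and
`A_{j+1}⁻¹ B_{j+1} = Aⱼ⁻¹ (Q₁₂ᴴ)⁻¹ Q₂₂ᴴ Bⱼ = Aⱼ⁻¹ Bⱼ Aⱼ⁻¹ Bⱼ`.
-/

open Matrix

namespace Matrix

variable {m n p α : Type*} [Fintype m] [Fintype n]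

theorem conjTranspose_toBlocks₁₂_mul_add_conjTranspose_toBlocks₂₂_mul_eq_zero
    [Semiring α] [Star α] [DecidableEq m] [DecidableEq n]
    {Q : Matrix (m ⊕ n) (m ⊕ n) α} (hQ : Qᴴ * Q = 1)
    {X R : Matrix m p α} {Y : Matrix n p α}
    -- without the ascription, `*` elaborates through the `CStarMatrix` default instance
    (hXY : fromRows X Y = Q * fromRows R (0 : Matrix n p α)) :
    Q.toBlocks₁₂ᴴ * X + Q.toBlocks₂₂ᴴ * Y = 0 := by
  have hQXY : Qᴴ * fromRows X Y = fromRows R 0 := by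
    rw [hXY, ← Matrix.mul_assoc, hQ, Matrix.one_mul]
  rw [← fromBlocks_toBlocks Q, fromBlocks_conjTranspose, fromBlocks_mul_fromRows,
    fromRows_inj.eq_iff] at hQXY
  exact hQXY.2

variable [DecidableEq n] [CommRing α]

theorem inv_mul_mul_eq_sq_of_mul_eq {P S A B : Matrix n n α} (hP : IsUnit P) (hA : IsUnit A)
    (hSA : S * A = P * B) : (P * A)⁻¹ * (S * B) = (A⁻¹ * B) ^ 2 := by
  have hPS : P⁻¹ * S = B * A⁻¹ := calc
    P⁻¹ * S = P⁻¹ * (S * A * A⁻¹) := by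
      rw [mul_nonsing_inv_cancel_right A S ((isUnit_iff_isUnit_det A).mp hA)]
    _ = B * A⁻¹ := by
      rw [hSA, Matrix.mul_assoc,
        nonsing_inv_mul_cancel_left P (B * A⁻¹) ((isUnit_iff_isUnit_det P).mp hP)]
  rw [mul_inv_rev, Matrix.mul_assoc, ← Matrix.mul_assoc P⁻¹, hPS, sq]
  simp only [Matrix.mul_assoc]

end Matrix

theorem irs_one_step_general {n : ℕ}
    (Aj Bj : Matrix (Fin n) (Fin n) ℂ)
    (hA : IsUnit Aj)
    (Q : Matrix (Fin n ⊕ Fin n) (Fin n ⊕ Fin n) ℂ)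
    (hQ : Qᴴ * Q = 1)
    (Rj : Matrix (Fin n) (Fin n) ℂ)
    (hQR : Matrix.fromRows Bj (-Aj) = Q * Matrix.fromRows Rj 0)
    (hQ12 : IsUnit Q.toBlocks₁₂) :
    IsUnit ((Q.toBlocks₁₂)ᴴ * Aj) ∧
      ((Q.toBlocks₁₂)ᴴ * Aj)⁻¹ * ((Q.toBlocks₂₂)ᴴ * Bj) = (Aj⁻¹ * Bj) ^ 2 := by
  have hQ12H : IsUnit Q.toBlocks₁₂ᴴ := (isUnit_conjTranspose _).mpr hQ12
  have hBA : Q.toBlocks₂₂ᴴ * Aj = Q.toBlocks₁₂ᴴ * Bj := by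
    have hrow := conjTranspose_toBlocks₁₂_mul_add_conjTranspose_toBlocks₂₂_mul_eq_zero hQ hQR
    rw [mul_neg, ← sub_eq_add_neg, sub_eq_zero] at hrow
    exact hrow.symm
  exact ⟨hQ12H.mul hA, inv_mul_mul_eq_sq_of_mul_eq hQ12H hA hBA⟩

/-- Correctness of one step of implicit repeated squaring (IRS): if
`[Bⱼ; −Aⱼ] = Q·[Rⱼ; 0]` with `Q` unitary and `Q₁₂` invertible, then setting
`A_{j+1} = Q₁₂ᴴ·Aⱼ`, `B_{j+1} = Q₂₂ᴴ·Bⱼ`, the matrix `A_{j+1}` is invertible and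
`A_{j+1}⁻¹·B_{j+1} = (Aⱼ⁻¹·Bⱼ)²`. -/
theorem irs_one_step {n : ℕ}
    (Aj Bj : Matrix (Fin n) (Fin n) ℂ)
    (hA : IsUnit Aj) (hB : IsUnit Bj)
    (Q : Matrix (Fin n ⊕ Fin n) (Fin n ⊕ Fin n) ℂ)
    (hQ : Qᴴ * Q = 1)
    (Rj : Matrix (Fin n) (Fin n) ℂ)
    (hQR : Matrix.fromRows Bj (-Aj) = Q * Matrix.fromRows Rj 0)
    (hQ12 : IsUnit Q.toBlocks₁₂) :
    IsUnit ((Q.toBlocks₁₂)ᴴ * Aj) ∧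
      ((Q.toBlocks₁₂)ᴴ * Aj)⁻¹ * ((Q.toBlocks₂₂)ᴴ * Bj) = (Aj⁻¹ * Bj) ^ 2 :=
  irs_one_step_general Aj Bj hA Q hQ Rj hQR hQ12
end

section
/- Let A and B be invertible n×n complex matrices. Define sequences by A₀ = A, B₀ = B, and for each j ≥ 0 suppose there is a 2n×2n unitary matrix Q⁽ʲ⁾ with n×n blocks Q₁₁⁽ʲ⁾, Q₁₂⁽ʲ⁾, Q₂₁⁽ʲ⁾, Q₂₂⁽ʲ⁾, where Q₁₂⁽ʲ⁾ is invertible, and an n×n matrix R_j such that [B_j; −A_j] = Q⁽ʲ⁾·[R_j; 0]; set A_{j+1} = (Q₁₂⁽ʲ⁾)ᴴ·A_j and B_{j+1} = (Q₂₂⁽ʲ⁾)ᴴ·B_j. Then for every p ≥ 0, the matrix A_p is invertible and A_p⁻¹·B_p = (A⁻¹·B)^(2^p). -/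
/-!
Since `Qᴴ Q = 1`, multiplying `[Bⱼ; -Aⱼ] = Q [Rⱼ; 0]` by `Qᴴ` and reading off the lower block row
gives `Q₁₂ᴴ Bⱼ = Q₂₂ᴴ Aⱼ`. Hence `Q₂₂ᴴ = Q₁₂ᴴ Bⱼ Aⱼ⁻¹`, and
`A_{j+1}⁻¹ B_{j+1} = Aⱼ⁻¹ Q₁₂⁻ᴴ · Q₁₂ᴴ Bⱼ Aⱼ⁻¹ · Bⱼ = (Aⱼ⁻¹ Bⱼ)²`: each step squares `Aⱼ⁻¹ Bⱼ`.
-/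

open Matrix

section Block

variable {m n k 𝕜 : Type*} [Fintype m] [Fintype n] [DecidableEq m] [DecidableEq n]
  [Ring 𝕜] [StarRing 𝕜]

theorem conjTranspose_toBlocks₁₂_mul_eq_of_fromRows_eq_mul {Q : Matrix (m ⊕ n) (m ⊕ n) 𝕜}
    {A : Matrix n k 𝕜} {B R : Matrix m k 𝕜} (hQ : Qᴴ * Q = 1)
    (hQR : fromRows B (-A) = Q * fromRows R 0) :
    Q.toBlocks₁₂ᴴ * B = Q.toBlocks₂₂ᴴ * A := by
  -- `Q * fromRows R 0` elaborates with the (defeq) `CStarMatrix` multiplication instance,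
  -- which defeats `rw` with `Matrix` lemmas; `exact` still accepts them.
  have hstar : Qᴴ * fromRows B (-A) = fromRows R 0 := calc
    Qᴴ * fromRows B (-A) = Qᴴ * Q * fromRows R 0 := by
      rw [hQR]; exact (Matrix.mul_assoc _ _ _).symm
    _ = fromRows R 0 := by rw [hQ]; exact Matrix.one_mul _
  rw [← fromBlocks_toBlocks Q, fromBlocks_conjTranspose, fromBlocks_mul_fromRows,
    fromRows_ext_iff] at hstar
  rw [← sub_eq_zero, ← hstar.2, Matrix.mul_neg, sub_eq_add_neg]

end Block

variable {n 𝕜 : Type*} [Fintype n] [DecidableEq n] [CommRing 𝕜]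

theorem mul_inv_mul_mul_eq_inv_mul_sq {A B X Y : Matrix n n 𝕜} (hA : IsUnit A) (hX : IsUnit X)
    (h : Y * A = X * B) : (X * A)⁻¹ * (Y * B) = (A⁻¹ * B) ^ 2 := by
  have hY : Y = X * B * A⁻¹ := by
    rw [← h, mul_nonsing_inv_cancel_right A _ ((isUnit_iff_isUnit_det A).mp hA)]
  rw [hY, Matrix.mul_inv_rev, sq]
  simp only [Matrix.mul_assoc, nonsing_inv_mul_cancel_left X _ ((isUnit_iff_isUnit_det X).mp hX)]

theorem irs_step [StarRing 𝕜] {Q : Matrix (n ⊕ n) (n ⊕ n) 𝕜} {A B R : Matrix n n 𝕜}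
    (hQ : Qᴴ * Q = 1) (hQ12 : IsUnit Q.toBlocks₁₂) (hQR : fromRows B (-A) = Q * fromRows R 0)
    (hA : IsUnit A) :
    IsUnit (Q.toBlocks₁₂ᴴ * A) ∧
      (Q.toBlocks₁₂ᴴ * A)⁻¹ * (Q.toBlocks₂₂ᴴ * B) = (A⁻¹ * B) ^ 2 := by
  have hQ12star : IsUnit Q.toBlocks₁₂ᴴ := (isUnit_conjTranspose _).mpr hQ12
  exact ⟨hQ12star.mul hA, mul_inv_mul_mul_eq_inv_mul_sq hA hQ12star
    (conjTranspose_toBlocks₁₂_mul_eq_of_fromRows_eq_mul hQ hQR).symm⟩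

theorem irs_correctness_general {n : ℕ}
    (A B : ℕ → Matrix (Fin n) (Fin n) ℂ)
    (Q : ℕ → Matrix (Fin n ⊕ Fin n) (Fin n ⊕ Fin n) ℂ)
    (R : ℕ → Matrix (Fin n) (Fin n) ℂ)
    (hA0 : IsUnit (A 0))
    (hQ : ∀ j, (Q j)ᴴ * Q j = 1)
    (hQ12 : ∀ j, IsUnit ((Q j).toBlocks₁₂))
    (hQR : ∀ j, Matrix.fromRows (B j) (-(A j)) = Q j * Matrix.fromRows (R j) 0)
    (hAstep : ∀ j, A (j + 1) = ((Q j).toBlocks₁₂)ᴴ * A j)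
    (hBstep : ∀ j, B (j + 1) = ((Q j).toBlocks₂₂)ᴴ * B j) :
    ∀ p : ℕ, IsUnit (A p) ∧ (A p)⁻¹ * B p = ((A 0)⁻¹ * B 0) ^ (2 ^ p) := by
  intro p
  induction p with
  | zero => exact ⟨hA0, by rw [pow_zero, pow_one]⟩
  | succ p ih =>
    obtain ⟨hAp, hpow⟩ := ih
    obtain ⟨hAsucc, hsq⟩ := irs_step (hQ p) (hQ12 p) (hQR p) hAp
    rw [hAstep, hBstep, hsq, hpow, ← pow_mul, pow_succ]
    exact ⟨hAsucc, rfl⟩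

/-- Correctness of the implicit repeated squaring (IRS) iteration: starting from
invertible `A 0`, `B 0`, if at each step `[Bⱼ; −Aⱼ] = Q⁽ʲ⁾·[Rⱼ; 0]` with `Q⁽ʲ⁾`
unitary, its block `Q₁₂⁽ʲ⁾` invertible, and `A_{j+1} = (Q₁₂⁽ʲ⁾)ᴴ·Aⱼ`,
`B_{j+1} = (Q₂₂⁽ʲ⁾)ᴴ·Bⱼ`, then for every `p` the matrix `A p` is invertible and
`(A p)⁻¹·(B p) = ((A 0)⁻¹·(B 0))^(2^p)`. -/
theorem irs_correctness {n : ℕ}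
    (A B : ℕ → Matrix (Fin n) (Fin n) ℂ)
    (Q : ℕ → Matrix (Fin n ⊕ Fin n) (Fin n ⊕ Fin n) ℂ)
    (R : ℕ → Matrix (Fin n) (Fin n) ℂ)
    (hA0 : IsUnit (A 0)) (hB0 : IsUnit (B 0))
    (hQ : ∀ j, (Q j)ᴴ * Q j = 1)
    (hQ12 : ∀ j, IsUnit ((Q j).toBlocks₁₂))
    (hQR : ∀ j, Matrix.fromRows (B j) (-(A j)) = Q j * Matrix.fromRows (R j) 0)
    (hAstep : ∀ j, A (j + 1) = ((Q j).toBlocks₁₂)ᴴ * A j)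
    (hBstep : ∀ j, B (j + 1) = ((Q j).toBlocks₂₂)ᴴ * B j) :
    ∀ p : ℕ, IsUnit (A p) ∧ (A p)⁻¹ * B p = ((A 0)⁻¹ * B 0) ^ (2 ^ p) :=
  irs_correctness_general A B Q R hA0 hQ hQ12 hQR hAstep hBstep
end

section
/- Let C be a diagonalizable n×n complex matrix, C = S·diag(λ₁,…,λ_n)·S⁻¹, with |λ_i| ≠ 1 for all i. Then for every p ≥ 0 the matrix I + C^(2^p) is invertible, and as p → ∞ the matrices (I + C^(2^p))⁻¹ converge to the spectral projector S·D·S⁻¹, where D is the diagonal matrix with D_ii = 1 if |λ_i| < 1 and D_ii = 0 if |λ_i| > 1. -/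
/-!
`v ↦ S * diagonal v * S⁻¹` is a ring homomorphism, so `I + C^(2^p)` and its inverse are
`S * diagonal (1 + λᵢ^(2^p))^(±1) * S⁻¹`, reducing the claim to the scalar limits
`(1 + z^m)⁻¹ → 1` for `‖z‖ < 1` and `(1 + z^m)⁻¹ → 0` for `‖z‖ > 1`.
-/

open Matrix Filter Topology Bornology

section Scalar

variable {𝕜 : Type*} [NormedField 𝕜]

theorem one_add_pow_ne_zero_of_norm_ne_one {z : 𝕜} (hz : ‖z‖ ≠ 1) {m : ℕ} (hm : m ≠ 0) :
    1 + z ^ m ≠ 0 := by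
  intro h
  apply hz
  have h' := congrArg norm (eq_neg_of_add_eq_zero_right h)
  rwa [norm_pow, norm_neg, norm_one, pow_eq_one_iff_of_nonneg (norm_nonneg z) hm] at h'

theorem tendsto_inv_one_add_pow_of_norm_lt_one {z : 𝕜} (hz : ‖z‖ < 1) :
    Tendsto (fun m : ℕ => (1 + z ^ m)⁻¹) atTop (𝓝 1) := by
  simpa using ((tendsto_pow_atTop_nhds_zero_of_norm_lt_one hz).const_add 1).inv₀ (by simp)

theorem tendsto_inv_one_add_pow_of_one_lt_norm {z : 𝕜} (hz : 1 < ‖z‖) :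
    Tendsto (fun m : ℕ => (1 + z ^ m)⁻¹) atTop (𝓝 0) := by
  have hpow : Tendsto (z ^ ·) atTop (cobounded 𝕜) := by
    simpa [← tendsto_norm_atTop_iff_cobounded] using tendsto_pow_atTop_atTop_of_one_lt hz
  exact tendsto_inv₀_cobounded.comp ((tendsto_const_add_cobounded 1).comp hpow)

theorem tendsto_inv_one_add_pow {z : 𝕜} (hz : ‖z‖ ≠ 1) :
    Tendsto (fun m : ℕ => (1 + z ^ m)⁻¹) atTop (𝓝 (if ‖z‖ < 1 then 1 else 0)) := by
  rcases hz.lt_or_gt with hlt | hgt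
  · simpa [hlt] using tendsto_inv_one_add_pow_of_norm_lt_one hlt
  · simpa [hgt.not_gt] using tendsto_inv_one_add_pow_of_one_lt_norm hgt

end Scalar

section ConjDiagonal

variable {m : Type*} [Fintype m] [DecidableEq m]

noncomputable def conjDiagonalRingHom {R : Type*} [CommRing R] (S : (Matrix m m R)ˣ) :
    (m → R) →+* Matrix m m R :=
  (MulSemiringAction.toRingHom (ConjAct (Matrix m m R)ˣ) _ (ConjAct.toConjAct S)).comp
    (diagonalRingHom m R)

theorem conjDiagonalRingHom_apply {R : Type*} [CommRing R] {S : Matrix m m R} (hS : IsUnit S)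
    (v : m → R) : conjDiagonalRingHom hS.unit v = S * diagonal v * S⁻¹ := by
  simp [conjDiagonalRingHom, ConjAct.units_smul_def, coe_units_inv]

theorem inv_conj_diagonal {K : Type*} [Field K] {S : Matrix m m K} (hS : IsUnit S)
    {v : m → K} (hv : ∀ i, v i ≠ 0) : (S * diagonal v * S⁻¹)⁻¹ = S * diagonal v⁻¹ * S⁻¹ := by
  have hvv : v * v⁻¹ = 1 := funext fun i => mul_inv_cancel₀ (hv i)
  rw [← conjDiagonalRingHom_apply hS, ← conjDiagonalRingHom_apply hS]
  exact inv_eq_right_inv (by rw [← map_mul, hvv, map_one])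

end ConjDiagonal

/-- For a diagonalizable matrix `C = S·diag(λ)·S⁻¹` with no eigenvalue of modulus 1,
every matrix `I + C^(2^p)` is invertible and, as `p → ∞`, `(I + C^(2^p))⁻¹`
converges to the spectral projector `S·D·S⁻¹`, where `D` is diagonal with
`D_ii = 1` if `|λᵢ| < 1` and `D_ii = 0` if `|λᵢ| > 1`. -/
theorem repeated_squaring_projector_limit {n : ℕ}
    (C S : Matrix (Fin n) (Fin n) ℂ) (lam : Fin n → ℂ)
    (hS : IsUnit S)
    (hC : C = S * Matrix.diagonal lam * S⁻¹)
    (hlam : ∀ i, ‖lam i‖ ≠ 1) :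
    (∀ p : ℕ, IsUnit (1 + C ^ (2 ^ p))) ∧
      Tendsto (fun p : ℕ => (1 + C ^ (2 ^ p))⁻¹) atTop
        (nhds (S * Matrix.diagonal
          (fun i => if ‖lam i‖ < 1 then (1 : ℂ) else 0) * S⁻¹)) := by
  have hφ := conjDiagonalRingHom_apply hS
  set φ := conjDiagonalRingHom hS.unit
  have hdiag (p : ℕ) : 1 + C ^ (2 ^ p) = φ (1 + lam ^ (2 ^ p)) := by
    rw [map_add, map_one, map_pow, hφ, hC]
  have hne (p : ℕ) (i : Fin n) : 1 + lam i ^ (2 ^ p) ≠ 0 :=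
    one_add_pow_ne_zero_of_norm_ne_one (hlam i) (by positivity)
  refine ⟨fun p => hdiag p ▸ (Pi.isUnit_iff.2 fun i => (hne p i).isUnit).map φ, ?_⟩
  have hinv (p : ℕ) : (1 + C ^ (2 ^ p))⁻¹ = S * diagonal (1 + lam ^ (2 ^ p))⁻¹ * S⁻¹ := by
    rw [hdiag, hφ]
    exact inv_conj_diagonal hS (hne p)
  simp_rw [hinv]
  have hcont : Continuous fun v : Fin n → ℂ => S * diagonal v * S⁻¹ := by fun_prop
  exact (hcont.tendsto _).comp <| tendsto_pi_nhds.2 fun i =>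
    (tendsto_inv_one_add_pow (hlam i)).comp (tendsto_pow_atTop_atTop_of_one_lt one_lt_two)
end

section
/- Let R be an m×m upper triangular matrix and X an n×m matrix. Suppose the (m+n)×m matrix A = [R; X] has the QR decomposition A = Q̂·[R̂; 0], where Q̂ is (m+n)×(m+n) unitary with blocks Q̂ = [[Q₁₁, Q₁₂], [Q₂₁, Q₂₂]] (Q₁₁ being m×m) and R̂ is m×m upper triangular. Let B be the (m+n)×(m+n) matrix [[R, 0], [X, 0]]. Then Q̂ᴴ·B·Q̂ = [[R̂·Q₁₁, R̂·Q₁₂], [0, 0]]. Moreover, if R̂ is invertible, then Q₁₁ = R·R̂⁻¹ is upper triangular, so that Q̂ᴴ·B·Q̂ is upper triangular (a Schur form of B); and if additionally Q₁₁ is invertible, then R̂ = (R̂·Q₁₁)·Q₁₁⁻¹. -/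
/-!
Since `Q̂ᴴ Q̂ = 1`, the QR equation gives `Q̂ᴴ [R; X] = [R̂; 0]`, hence `Q̂ᴴ B = [[R̂, 0], [0, 0]]`
(the zero columns of `B` stay zero), and multiplying by `Q̂` on the right only involves its top
block row. The top block row of the QR equation reads `R = Q₁₁ R̂`, so `Q₁₁ = R R̂⁻¹` is a product
of upper triangular matrices, and then so is `R̂ Q₁₁`, the only nonzero diagonal block.
-/

open Matrix

namespace Matrix

variable {α β l m n m' n' p : Type*}

theorem fromBlocks_zero_right_eq_fromCols [Zero α] (A : Matrix m l α) (C : Matrix n l α) :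
    fromBlocks A (0 : Matrix m p α) C 0 = fromCols (fromRows A C) 0 := by
  ext (i | i) (j | j) <;> rfl

theorem BlockTriangular.fromBlocks_zero₂₁ [Zero α] [Preorder β] {f : m → β} {g : n → β}
    {A : Matrix m m α} {D : Matrix n n α} (hA : A.BlockTriangular f) (hD : D.BlockTriangular g)
    (B : Matrix m n α) (hfg : ∀ i j, f i ≤ g j) :
    (fromBlocks A B 0 D).BlockTriangular (Sum.elim f g) := by
  rintro (i | i) (j | j) hji
  · exact hA hji
  · exact absurd hji (hfg i j).not_gt
  · rfl
  · exact hD hji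

section Semiring

variable [Semiring α] [Fintype m] [Fintype n]

theorem fromBlocks_zero_mul (A : Matrix l m α) (M : Matrix (m ⊕ n) (m' ⊕ n') α) :
    fromBlocks A 0 (0 : Matrix p m α) (0 : Matrix p n α) * M =
      fromBlocks (A * M.toBlocks₁₁) (A * M.toBlocks₁₂) 0 0 := by
  conv_lhs => rw [← fromBlocks_toBlocks M]
  simp [fromBlocks_multiply]

omit [Fintype m] [Fintype n] in
-- Without the ascription on `0`, `*` elaborates to the `CStarMatrix` multiplication.
theorem eq_toBlocks₁₁_mul_of_fromRows_eq [Fintype m'] [Fintype n'] {A : Matrix m l α}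
    {C : Matrix n l α} {Q : Matrix (m ⊕ n) (m' ⊕ n') α} {A' : Matrix m' l α}
    (h : fromRows A C = Q * fromRows A' (0 : Matrix n' l α)) : A = Q.toBlocks₁₁ * A' := by
  rw [← fromBlocks_toBlocks Q, fromBlocks_mul_fromRows] at h
  simpa using congrArg toRows₁ h

theorem mul_fromBlocks_zero_right_of_fromRows_eq [Fintype m'] [Fintype n'] [DecidableEq m']
    [DecidableEq n'] {P : Matrix (m' ⊕ n') (m ⊕ n) α} {Q : Matrix (m ⊕ n) (m' ⊕ n') α}
    (hPQ : P * Q = 1) {A : Matrix m l α} {C : Matrix n l α} {A' : Matrix m' l α}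
    {C' : Matrix n' l α} (h : fromRows A C = Q * fromRows A' C') :
    P * fromBlocks A (0 : Matrix m p α) C 0 = fromBlocks A' 0 C' 0 := by
  rw [fromBlocks_zero_right_eq_fromCols, mul_fromCols, h, ← Matrix.mul_assoc, hPQ,
    Matrix.one_mul, Matrix.mul_zero, ← fromBlocks_zero_right_eq_fromCols]

end Semiring

end Matrix

/-- Reduction of QR decomposition to Schur form: given the QR decomposition
`[R; X] = Q̂·[R̂; 0]` with `Q̂` unitary and `R`, `R̂` upper triangular, the matrix
`B = [[R, 0], [X, 0]]` satisfies `Q̂ᴴ·B·Q̂ = [[R̂·Q₁₁, R̂·Q₁₂], [0, 0]]`; moreover if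
`R̂` is invertible then `Q₁₁ = R·R̂⁻¹` is upper triangular, the matrix `Q̂ᴴ·B·Q̂` is
upper triangular (a Schur form of `B`), and if additionally `Q₁₁` is invertible
then `R̂ = (R̂·Q₁₁)·Q₁₁⁻¹`. -/
theorem qr_reduces_to_schur {m n : ℕ}
    (R : Matrix (Fin m) (Fin m) ℂ) (hR : R.BlockTriangular (id : Fin m → Fin m))
    (X : Matrix (Fin n) (Fin m) ℂ)
    (Qhat : Matrix (Fin m ⊕ Fin n) (Fin m ⊕ Fin n) ℂ) (hQ : Qhatᴴ * Qhat = 1)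
    (Rhat : Matrix (Fin m) (Fin m) ℂ)
    (hRhat : Rhat.BlockTriangular (id : Fin m → Fin m))
    (hQR : Matrix.fromRows R X = Qhat * Matrix.fromRows Rhat 0) :
    Qhatᴴ * Matrix.fromBlocks R 0 X 0 * Qhat =
        Matrix.fromBlocks (Rhat * Qhat.toBlocks₁₁) (Rhat * Qhat.toBlocks₁₂) 0 0 ∧
      (IsUnit Rhat →
        Qhat.toBlocks₁₁ = R * Rhat⁻¹ ∧
        (Qhat.toBlocks₁₁).BlockTriangular (id : Fin m → Fin m) ∧
        (Qhatᴴ * Matrix.fromBlocks R 0 X 0 * Qhat).BlockTriangular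
          (Sum.elim (fun i : Fin m => (i : ℕ)) (fun j : Fin n => m + (j : ℕ))) ∧
        (IsUnit Qhat.toBlocks₁₁ →
          Rhat = (Rhat * Qhat.toBlocks₁₁) * (Qhat.toBlocks₁₁)⁻¹)) := by
  have hSchur : Qhatᴴ * fromBlocks R 0 X 0 * Qhat =
      fromBlocks (Rhat * Qhat.toBlocks₁₁) (Rhat * Qhat.toBlocks₁₂) 0 0 := by
    rw [mul_fromBlocks_zero_right_of_fromRows_eq hQ hQR, fromBlocks_zero_mul]
  refine ⟨hSchur, fun hRhat_unit => ?_⟩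
  have hQ₁₁ : Qhat.toBlocks₁₁ = R * Rhat⁻¹ := by
    rw [eq_toBlocks₁₁_mul_of_fromRows_eq hQR,
      mul_nonsing_inv_cancel_right _ _ ((isUnit_iff_isUnit_det _).mp hRhat_unit)]
  have hQ₁₁_tri : Qhat.toBlocks₁₁.BlockTriangular id := by
    have := hRhat_unit.invertible
    rw [hQ₁₁]
    exact hR.mul (blockTriangular_inv_of_blockTriangular hRhat)
  refine ⟨hQ₁₁, hQ₁₁_tri, ?_, fun hQ₁₁_unit => ?_⟩
  · rw [hSchur]
    refine BlockTriangular.fromBlocks_zero₂₁ ?_ blockTriangular_zero _ fun i j => ?_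
    · exact hRhat.mul hQ₁₁_tri
    · have := i.isLt
      omega
  · exact (mul_nonsing_inv_cancel_right _ _ ((isUnit_iff_isUnit_det _).mp hQ₁₁_unit)).symm
end

section
/- Let T be an n×n upper triangular complex matrix whose diagonal entries T₁₁, …, T_nn are pairwise distinct, and let D be the diagonal matrix with D_jj = T_jj. Then for any choice of nonzero complex numbers x₁, …, x_n, there exists a unique upper triangular matrix X with X_jj = x_j for all j and T·X = X·D, and this X is invertible. In particular, the columns of X are eigenvectors of T. -/
/-!
Column `j` of `X` is determined by back substitution: entries below the diagonal vanish,
`X j j = x j`, and for `i < j` the `(i, j)` entry of `T X = X D` reads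
`∑_{k > i} T i k X k j = X i j (T j j - T i i)`, which determines `X i j` from the entries
further down the column because `T j j ≠ T i i`. The same recursion shows uniqueness, and `X` is
invertible since it is triangular with nonzero diagonal.
-/

open Finset

namespace Matrix

variable {ι : Type*} [LinearOrder ι] [Fintype ι]

section CommRing

variable {R : Type*} [CommRing R] {T Y : Matrix ι ι R}

theorem IsUpperTriangular.mul_apply (hT : T.IsUpperTriangular) (i j : ι) :
    (T * Y) i j = T i i * Y i j + ∑ k with i < k, T i k * Y k j := by
  rw [Matrix.mul_apply, ← sum_filter_add_sum_filter_not univ (i ≤ ·)]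
  have hbelow : ∑ k with ¬i ≤ k, T i k * Y k j = 0 :=
    sum_eq_zero fun k hk => by rw [hT (not_le.1 (mem_filter.1 hk).2), zero_mul]
  have hsplit : univ.filter (i ≤ ·) = insert i (univ.filter (i < ·)) := by
    ext k; simp [le_iff_eq_or_lt, eq_comm]
  rw [hbelow, add_zero, hsplit, sum_insert (by simp)]

theorem IsUpperTriangular.mul_eq_mul_diagonal_diag_iff (hT : T.IsUpperTriangular) :
    T * Y = Y * diagonal T.diag ↔
      ∀ i j, ∑ k with i < k, T i k * Y k j = Y i j * (T j j - T i i) := by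
  refine ⟨fun h i j => ?_, fun h => ext fun i j => ?_⟩
  · have hij := congr_fun₂ h i j
    rw [hT.mul_apply, mul_diagonal] at hij
    simp only [diag_apply] at hij
    linear_combination hij
  · rw [hT.mul_apply, mul_diagonal, h, diag_apply]
    ring

theorem mulVec_col_eq_smul_of_mul_eq_mul_diagonal {X : Matrix ι ι R} {d : ι → R}
    (h : T * X = X * diagonal d) (j : ι) :
    T *ᵥ (fun i => X i j) = d j • fun i => X i j := by
  ext i
  have hij : (T * X) i j = (X * diagonal d) i j := by rw [h]
  rw [Matrix.mul_apply, mul_diagonal] at hij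
  simpa [mulVec, dotProduct, mul_comm] using hij

end CommRing

theorem IsUpperTriangular.isUnit {K : Type*} [Field K] {T : Matrix ι ι K}
    (hT : T.IsUpperTriangular) (hdiag : ∀ i, T i i ≠ 0) : IsUnit T := by
  rw [isUnit_iff_isUnit_det, det_of_isUpperTriangular hT, isUnit_iff_ne_zero]
  exact prod_ne_zero_iff.2 fun i _ => hdiag i

variable {K : Type*} [Field K]

attribute [local instance] WellFoundedLT.toWellFoundedRelation in
/-- The back substitution of LAPACK's `TREVC`, running up each column (a well-founded recursion
on `ιᵒᵈ`). The divisions are by zero, hence junk, unless the diagonal of `T` is injective. -/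
noncomputable def eigenvectorMatrix (T : Matrix ι ι K) (x : ι → K) : Matrix ι ι K := fun i j =>
  if j < i then 0
  else if i = j then x j
  else (∑ k ∈ ({k | i < k} : Finset ι).attach, T i k * eigenvectorMatrix T x k j) /
    (T j j - T i i)
termination_by i => OrderDual.toDual i
decreasing_by exact (mem_filter.1 k.2).2

variable (T : Matrix ι ι K) (x : ι → K)

theorem eigenvectorMatrix_of_lt {i j : ι} (h : j < i) : eigenvectorMatrix T x i j = 0 := by
  rw [eigenvectorMatrix, if_pos h]

theorem eigenvectorMatrix_self (j : ι) : eigenvectorMatrix T x j j = x j := by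
  rw [eigenvectorMatrix, if_neg (lt_irrefl j), if_pos rfl]

theorem eigenvectorMatrix_of_gt {i j : ι} (h : i < j) :
    eigenvectorMatrix T x i j =
      (∑ k with i < k, T i k * eigenvectorMatrix T x k j) / (T j j - T i i) := by
  rw [eigenvectorMatrix, if_neg (not_lt.2 h.le), if_neg h.ne,
    sum_attach _ fun k => T i k * eigenvectorMatrix T x k j]

theorem isUpperTriangular_eigenvectorMatrix :
    (eigenvectorMatrix T x).IsUpperTriangular :=
  fun _ _ h => eigenvectorMatrix_of_lt T x h

variable {T}

theorem IsUpperTriangular.mul_eigenvectorMatrix (hT : T.IsUpperTriangular)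
    (hdiag : Function.Injective T.diag) :
    T * eigenvectorMatrix T x = eigenvectorMatrix T x * diagonal T.diag := by
  refine hT.mul_eq_mul_diagonal_diag_iff.2 fun i j => ?_
  rcases lt_trichotomy i j with h | rfl | h
  · have hne : T j j - T i i ≠ 0 := sub_ne_zero.2 fun he => h.ne' (hdiag he)
    rw [eigenvectorMatrix_of_gt T x h, div_mul_cancel₀ _ hne]
  · rw [sub_self, mul_zero]
    exact sum_eq_zero fun k hk => by
      rw [eigenvectorMatrix_of_lt T x (mem_filter.1 hk).2, mul_zero]
  · rw [eigenvectorMatrix_of_lt T x h, zero_mul]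
    exact sum_eq_zero fun k hk => by
      rw [eigenvectorMatrix_of_lt T x (h.trans (mem_filter.1 hk).2), mul_zero]

theorem IsUpperTriangular.eq_eigenvectorMatrix (hT : T.IsUpperTriangular)
    (hdiag : Function.Injective T.diag) {Y : Matrix ι ι K} (hY : Y.IsUpperTriangular)
    (hYx : ∀ j, Y j j = x j) (hTY : T * Y = Y * diagonal T.diag) :
    Y = eigenvectorMatrix T x := by
  ext i j
  induction i using WellFoundedGT.induction with
  | _ i ih =>
    rcases lt_trichotomy i j with h | rfl | h
    · have hne : T j j - T i i ≠ 0 := sub_ne_zero.2 fun he => h.ne' (hdiag he)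
      have hrow := hT.mul_eq_mul_diagonal_diag_iff.1 hTY i j
      rw [eigenvectorMatrix_of_gt T x h, eq_div_iff hne, ← hrow]
      exact sum_congr rfl fun k hk => by rw [ih k (mem_filter.1 hk).2]
    · rw [hYx, eigenvectorMatrix_self]
    · rw [hY h, eigenvectorMatrix_of_lt T x h]

end Matrix

open Matrix in
/-- For an upper triangular matrix `T` with pairwise distinct diagonal entries and
any prescribed nonzero diagonal values `x₁, …, x_n`, there is a unique upper
triangular matrix `X` with `X_jj = x_j` and `T·X = X·D` (where `D = diag(T)`),
this `X` is invertible, and its columns are eigenvectors of `T`. -/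
theorem triangular_eigenvector_matrix {n : ℕ}
    (T : Matrix (Fin n) (Fin n) ℂ)
    (hT : T.BlockTriangular (id : Fin n → Fin n))
    (hdist : ∀ i j : Fin n, i ≠ j → T i i ≠ T j j)
    (x : Fin n → ℂ) (hx : ∀ j, x j ≠ 0) :
    ∃ X : Matrix (Fin n) (Fin n) ℂ,
      (X.BlockTriangular (id : Fin n → Fin n) ∧ (∀ j, X j j = x j) ∧
        T * X = X * Matrix.diagonal (fun j => T j j)) ∧
      IsUnit X ∧
      (∀ j, T.mulVec (fun i => X i j) = T j j • fun i => X i j) ∧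
      ∀ Y : Matrix (Fin n) (Fin n) ℂ,
        (Y.BlockTriangular (id : Fin n → Fin n) ∧ (∀ j, Y j j = x j) ∧
          T * Y = Y * Matrix.diagonal (fun j => T j j)) → Y = X := by
  have hdiag : Function.Injective T.diag := fun i j h => by_contra fun hne => hdist i j hne h
  have hXt := isUpperTriangular_eigenvectorMatrix T x
  have hXx := eigenvectorMatrix_self T x
  have hTX := IsUpperTriangular.mul_eigenvectorMatrix x hT hdiag
  refine ⟨eigenvectorMatrix T x, ⟨hXt, hXx, hTX⟩, ?_, ?_, ?_⟩
  · exact hXt.isUnit fun j => hXx j ▸ hx j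
  · exact mulVec_col_eq_smul_of_mul_eq_mul_diagonal hTX
  · rintro Y ⟨hY, hYx, hTY⟩
    exact IsUpperTriangular.eq_eigenvectorMatrix x hT hdiag hY hYx hTY
end

section
/- Let M be an n×n complex matrix with M = U·R, where U is unitary and R is block upper triangular: R = [[R₁₁, R₁₂], [0, R₂₂]] with R₁₁ of size r×r and invertible. Write M = [Y₁, Y₂] where Y₁ consists of the first r columns of M. Then Y₁ᴴ·Y₁ is invertible and R₁₁⁻¹·R₁₂ = (Y₁ᴴ·Y₁)⁻¹·Y₁ᴴ·Y₂, i.e., R₁₁⁻¹R₁₂ equals the pseudoinverse of Y₁ applied to Y₂. -/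
open Matrix

/-!
Since `U` is an isometry, `Y₁ = U [R₁₁; 0]` and `Y₂ = U [R₁₂; R₂₂]` have the Gram products
`Y₁ᴴ Y₁ = R₁₁ᴴ R₁₁` and `Y₁ᴴ Y₂ = R₁₁ᴴ R₁₂`. The first is invertible with `R₁₁`, and the
left pseudoinverse `(R₁₁ᴴ R₁₁)⁻¹ R₁₁ᴴ` of the invertible `R₁₁` is just `R₁₁⁻¹`.
-/

namespace Matrix

variable {l m n k : Type*} {α : Type*}

section Semiring

variable [Semiring α]

theorem conjTranspose_mul_mul_of_conjTranspose_mul_self_eq_one [StarRing α] [Fintype n]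
    [Fintype m] [DecidableEq n] {U : Matrix m n α} (hU : Uᴴ * U = 1) (A : Matrix n l α)
    (B : Matrix n k α) : (U * A)ᴴ * (U * B) = Aᴴ * B := by
  rw [conjTranspose_mul, Matrix.mul_assoc, ← Matrix.mul_assoc Uᴴ, hU, Matrix.one_mul]

theorem toCols₁_mul_fromBlocks [Fintype m] [Fintype n] {m' n' : Type*}
    (U : Matrix l (m ⊕ n) α) (A : Matrix m m' α) (B : Matrix m n' α) (C : Matrix n m' α)
    (D : Matrix n n' α) : (U * fromBlocks A B C D).toCols₁ = U * fromRows A C := by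
  rw [← fromCols_fromRows_eq_fromBlocks, mul_fromCols, toCols₁_fromCols]

theorem toCols₂_mul_fromBlocks [Fintype m] [Fintype n] {m' n' : Type*}
    (U : Matrix l (m ⊕ n) α) (A : Matrix m m' α) (B : Matrix m n' α) (C : Matrix n m' α)
    (D : Matrix n n' α) : (U * fromBlocks A B C D).toCols₂ = U * fromRows B D := by
  rw [← fromCols_fromRows_eq_fromBlocks, mul_fromCols, toCols₂_fromCols]

theorem conjTranspose_fromRows_zero_mul_fromRows [StarRing α] [Fintype m] [Fintype n]
    (A : Matrix m l α) (B : Matrix m k α) (D : Matrix n k α) :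
    (fromRows A (0 : Matrix n l α))ᴴ * fromRows B D = Aᴴ * B := by
  rw [conjTranspose_fromRows_eq_fromCols_conjTranspose, fromCols_mul_fromRows,
    conjTranspose_zero, Matrix.zero_mul, add_zero]

end Semiring

theorem inv_conjTranspose_mul_self_mul_conjTranspose [Fintype n] [DecidableEq n] [CommRing α]
    [StarRing α] {A : Matrix n n α} (hA : IsUnit A) : (Aᴴ * A)⁻¹ * Aᴴ = A⁻¹ := by
  have hAH : IsUnit Aᴴ.det := (isUnit_iff_isUnit_det _).mp ((isUnit_conjTranspose A).mpr hA)
  rw [Matrix.mul_inv_rev, Matrix.mul_assoc, nonsing_inv_mul _ hAH, Matrix.mul_one]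

end Matrix

/-- If `M = U·R` with `U` unitary and `R` block upper triangular with invertible
leading `r×r` block `R₁₁`, and `Y₁`, `Y₂` are the first `r` and the remaining
columns of `M`, then `Y₁ᴴ·Y₁` is invertible and
`R₁₁⁻¹·R₁₂ = (Y₁ᴴ·Y₁)⁻¹·Y₁ᴴ·Y₂`. -/
theorem r11_inv_r12_eq_pseudoinverse {r s : ℕ}
    (M U : Matrix (Fin r ⊕ Fin s) (Fin r ⊕ Fin s) ℂ)
    (R₁₁ : Matrix (Fin r) (Fin r) ℂ) (R₁₂ : Matrix (Fin r) (Fin s) ℂ)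
    (R₂₂ : Matrix (Fin s) (Fin s) ℂ)
    (hU : Uᴴ * U = 1) (hR11 : IsUnit R₁₁)
    (hM : M = U * Matrix.fromBlocks R₁₁ R₁₂ 0 R₂₂) :
    IsUnit ((M.toCols₁)ᴴ * M.toCols₁) ∧
      R₁₁⁻¹ * R₁₂ =
        ((M.toCols₁)ᴴ * M.toCols₁)⁻¹ * (M.toCols₁)ᴴ * M.toCols₂ := by
  have hgram : (M.toCols₁)ᴴ * M.toCols₁ = R₁₁ᴴ * R₁₁ := by
    rw [hM, toCols₁_mul_fromBlocks, conjTranspose_mul_mul_of_conjTranspose_mul_self_eq_one hU,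
      conjTranspose_fromRows_zero_mul_fromRows]
  have hcross : (M.toCols₁)ᴴ * M.toCols₂ = R₁₁ᴴ * R₁₂ := by
    rw [hM, toCols₁_mul_fromBlocks, toCols₂_mul_fromBlocks,
      conjTranspose_mul_mul_of_conjTranspose_mul_self_eq_one hU,
      conjTranspose_fromRows_zero_mul_fromRows]
  refine ⟨hgram ▸ ((isUnit_conjTranspose R₁₁).mpr hR11).mul hR11, ?_⟩
  rw [Matrix.mul_assoc, hgram, hcross, ← Matrix.mul_assoc,
    inv_conjTranspose_mul_self_mul_conjTranspose hR11]
end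

section
/- Let A be an invertible n×n complex matrix with singular value decomposition A = P·Σ·Qᴴ, where P and Q are unitary and Σ = diag(Σ₁, Σ₂) is block diagonal with Σ₁ of size r×r. Suppose A = U·R·V, where U and V are unitary and R = [[R₁₁, R₁₂], [0, R₂₂]] is block upper triangular with R₁₁ of size r×r and invertible. Let X = Qᴴ·Vᴴ, partitioned into blocks X₁₁ (r×r), X₁₂ (r×(n−r)), X₂₁ ((n−r)×r), X₂₂ ((n−r)×(n−r)). If X₁₁ᴴ·Σ₁²·X₁₁ + X₂₁ᴴ·Σ₂²·X₂₁ is invertible, then R₁₁⁻¹·R₁₂ = (X₁₁ᴴ·Σ₁²·X₁₁ + X₂₁ᴴ·Σ₂²·X₂₁)⁻¹·(X₁₁ᴴ·Σ₁²·X₁₂ + X₂₁ᴴ·Σ₂²·X₂₂). -/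
/-!
`R` and `Σ·X` differ by the unitary factor `Uᴴ·P`, so they have the same Gram matrix:
`Rᴴ·R = Xᴴ·Σ²·X`. Reading off the `(1,1)` and `(1,2)` blocks of both sides gives
`R₁₁ᴴ·R₁₁ = X₁₁ᴴ·Σ₁²·X₁₁ + X₂₁ᴴ·Σ₂²·X₂₁` and `R₁₁ᴴ·R₁₂ = X₁₁ᴴ·Σ₁²·X₁₂ + X₂₁ᴴ·Σ₂²·X₂₂`,
and `R₁₁⁻¹·R₁₂ = (R₁₁ᴴ·R₁₁)⁻¹·(R₁₁ᴴ·R₁₂)`.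
-/

namespace Matrix

variable {l m n p q α : Type*}

theorem conjTranspose_mul_self_unitary_mul [Fintype n] [DecidableEq n] [Semiring α]
    [StarRing α] {U : Matrix n n α} (hU : Uᴴ * U = 1) (B : Matrix n m α) :
    (U * B)ᴴ * (U * B) = Bᴴ * B := by
  rw [conjTranspose_mul, Matrix.mul_assoc, ← Matrix.mul_assoc Uᴴ, hU, Matrix.one_mul]

section CommRing

variable [Fintype n] [DecidableEq n] [CommRing α] [StarRing α]

theorem conjTranspose_mul_self_eq_of_unitary_factorizations {P U V Q R S : Matrix n n α}
    (hP : Pᴴ * P = 1) (hU : Uᴴ * U = 1) (hV : Vᴴ * V = 1) (h : U * R * V = P * S * Qᴴ) :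
    Rᴴ * R = (Qᴴ * Vᴴ)ᴴ * (Sᴴ * S) * (Qᴴ * Vᴴ) := by
  have hU' : U * Uᴴ = 1 := mul_eq_one_comm.mp hU
  have hV' : V * Vᴴ = 1 := mul_eq_one_comm.mp hV
  have hR : R = (Uᴴ * P) * (S * (Qᴴ * Vᴴ)) := by
    calc R = Uᴴ * (U * R * V) * Vᴴ := by
          simp only [Matrix.mul_assoc, hV', Matrix.mul_one, ← Matrix.mul_assoc Uᴴ, hU,
            Matrix.one_mul]
      _ = (Uᴴ * P) * (S * (Qᴴ * Vᴴ)) := by rw [h]; simp only [Matrix.mul_assoc]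
  have hUP : (Uᴴ * P)ᴴ * (Uᴴ * P) = 1 := by
    rw [conjTranspose_mul, conjTranspose_conjTranspose, Matrix.mul_assoc, ← Matrix.mul_assoc U,
      hU', Matrix.one_mul, hP]
  rw [hR, conjTranspose_mul_self_unitary_mul hUP, conjTranspose_mul]
  simp only [Matrix.mul_assoc]

theorem inv_mul_eq_conjTranspose_mul_self_inv_mul {A : Matrix n n α} (hA : IsUnit A)
    (B : Matrix n m α) : A⁻¹ * B = (Aᴴ * A)⁻¹ * (Aᴴ * B) := by
  have hAH : IsUnit Aᴴ.det := (isUnit_iff_isUnit_det _).mp ((isUnit_conjTranspose _).mpr hA)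
  rw [mul_inv_rev, Matrix.mul_assoc, ← Matrix.mul_assoc Aᴴ⁻¹, nonsing_inv_mul _ hAH,
    Matrix.one_mul]

end CommRing

section Blocks

variable [Semiring α] [StarRing α]

theorem toBlocks₁₁_conjTranspose_mul_self_fromBlocks_zero₂₁ [Fintype l] [Fintype m]
    (A : Matrix m m α) (B : Matrix m n α) (D : Matrix l n α) :
    ((fromBlocks A B 0 D)ᴴ * fromBlocks A B 0 D).toBlocks₁₁ = Aᴴ * A := by
  simp [fromBlocks_conjTranspose, fromBlocks_multiply]

theorem toBlocks₁₂_conjTranspose_mul_self_fromBlocks_zero₂₁ [Fintype l] [Fintype m]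
    (A : Matrix m m α) (B : Matrix m n α) (D : Matrix l n α) :
    ((fromBlocks A B 0 D)ᴴ * fromBlocks A B 0 D).toBlocks₁₂ = Aᴴ * B := by
  simp [fromBlocks_conjTranspose, fromBlocks_multiply]

variable [Fintype m] [Fintype n]

theorem toBlocks₁₁_conjTranspose_mul_fromBlocks_diag_mul (X : Matrix (m ⊕ n) (p ⊕ q) α)
    (D₁ : Matrix m m α) (D₂ : Matrix n n α) :
    (Xᴴ * fromBlocks D₁ 0 0 D₂ * X).toBlocks₁₁ =
      X.toBlocks₁₁ᴴ * D₁ * X.toBlocks₁₁ + X.toBlocks₂₁ᴴ * D₂ * X.toBlocks₂₁ := by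
  conv_lhs => rw [← fromBlocks_toBlocks X]
  simp [fromBlocks_conjTranspose, fromBlocks_multiply]

theorem toBlocks₁₂_conjTranspose_mul_fromBlocks_diag_mul (X : Matrix (m ⊕ n) (p ⊕ q) α)
    (D₁ : Matrix m m α) (D₂ : Matrix n n α) :
    (Xᴴ * fromBlocks D₁ 0 0 D₂ * X).toBlocks₁₂ =
      X.toBlocks₁₁ᴴ * D₁ * X.toBlocks₁₂ + X.toBlocks₂₁ᴴ * D₂ * X.toBlocks₂₂ := by
  conv_lhs => rw [← fromBlocks_toBlocks X]
  simp [fromBlocks_conjTranspose, fromBlocks_multiply]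

end Blocks

end Matrix

open Matrix

theorem rurv_strong_rrqr_identity_general {r s : ℕ}
    (A P Q U V : Matrix (Fin r ⊕ Fin s) (Fin r ⊕ Fin s) ℂ)
    (σ₁ : Fin r → ℝ) (σ₂ : Fin s → ℝ)
    (R₁₁ : Matrix (Fin r) (Fin r) ℂ) (R₁₂ : Matrix (Fin r) (Fin s) ℂ)
    (R₂₂ : Matrix (Fin s) (Fin s) ℂ)
    (hP : Pᴴ * P = 1) (hU : Uᴴ * U = 1) (hV : Vᴴ * V = 1)
    (hSVD : A = P * Matrix.fromBlocks (Matrix.diagonal fun i => (σ₁ i : ℂ)) 0 0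
        (Matrix.diagonal fun i => (σ₂ i : ℂ)) * Qᴴ)
    (hR11 : IsUnit R₁₁)
    (hURV : A = U * Matrix.fromBlocks R₁₁ R₁₂ 0 R₂₂ * V) :
    let Sig₁ : Matrix (Fin r) (Fin r) ℂ := Matrix.diagonal fun i => (σ₁ i : ℂ)
    let Sig₂ : Matrix (Fin s) (Fin s) ℂ := Matrix.diagonal fun i => (σ₂ i : ℂ)
    let X := Qᴴ * Vᴴ
    IsUnit ((X.toBlocks₁₁)ᴴ * Sig₁ ^ 2 * X.toBlocks₁₁ +
        (X.toBlocks₂₁)ᴴ * Sig₂ ^ 2 * X.toBlocks₂₁) →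
      R₁₁⁻¹ * R₁₂ =
        ((X.toBlocks₁₁)ᴴ * Sig₁ ^ 2 * X.toBlocks₁₁ +
            (X.toBlocks₂₁)ᴴ * Sig₂ ^ 2 * X.toBlocks₂₁)⁻¹ *
          ((X.toBlocks₁₁)ᴴ * Sig₁ ^ 2 * X.toBlocks₁₂ +
            (X.toBlocks₂₁)ᴴ * Sig₂ ^ 2 * X.toBlocks₂₂) := by
  intro Sig₁ Sig₂ X _
  have hSig : (fromBlocks Sig₁ 0 0 Sig₂).IsHermitian :=
    .fromBlocks (isHermitian_diagonal_iff.mpr fun _ => Complex.conj_ofReal _) (by simp)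
      (isHermitian_diagonal_iff.mpr fun _ => Complex.conj_ofReal _)
  have hGram := conjTranspose_mul_self_eq_of_unitary_factorizations hP hU hV (hURV.symm.trans hSVD)
  rw [hSig.eq, ← sq, fromBlocks_diagonal_pow] at hGram
  have h₁₁ := congrArg toBlocks₁₁ hGram
  have h₁₂ := congrArg toBlocks₁₂ hGram
  rw [toBlocks₁₁_conjTranspose_mul_self_fromBlocks_zero₂₁,
    toBlocks₁₁_conjTranspose_mul_fromBlocks_diag_mul] at h₁₁
  rw [toBlocks₁₂_conjTranspose_mul_self_fromBlocks_zero₂₁,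
    toBlocks₁₂_conjTranspose_mul_fromBlocks_diag_mul] at h₁₂
  rw [inv_mul_eq_conjTranspose_mul_self_inv_mul hR11, h₁₁, h₁₂]

/-- Key identity in the proof that RURV is a strong rank-revealing factorization:
with `A = P·Σ·Qᴴ` an SVD (`Σ = diag(Σ₁, Σ₂)`), `A = U·R·V` with `U`, `V` unitary
and `R` block upper triangular with invertible `R₁₁`, and `X = Qᴴ·Vᴴ`, if
`X₁₁ᴴ·Σ₁²·X₁₁ + X₂₁ᴴ·Σ₂²·X₂₁` is invertible then
`R₁₁⁻¹·R₁₂ = (X₁₁ᴴ·Σ₁²·X₁₁ + X₂₁ᴴ·Σ₂²·X₂₁)⁻¹·(X₁₁ᴴ·Σ₁²·X₁₂ + X₂₁ᴴ·Σ₂²·X₂₂)`. -/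
theorem rurv_strong_rrqr_identity {r s : ℕ}
    (A P Q U V : Matrix (Fin r ⊕ Fin s) (Fin r ⊕ Fin s) ℂ)
    (σ₁ : Fin r → ℝ) (σ₂ : Fin s → ℝ)
    (hσ₁ : ∀ i, 0 ≤ σ₁ i) (hσ₂ : ∀ i, 0 ≤ σ₂ i)
    (R₁₁ : Matrix (Fin r) (Fin r) ℂ) (R₁₂ : Matrix (Fin r) (Fin s) ℂ)
    (R₂₂ : Matrix (Fin s) (Fin s) ℂ)
    (hA : IsUnit A)
    (hP : Pᴴ * P = 1) (hQ : Qᴴ * Q = 1) (hU : Uᴴ * U = 1) (hV : Vᴴ * V = 1)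
    (hSVD : A = P * Matrix.fromBlocks (Matrix.diagonal fun i => (σ₁ i : ℂ)) 0 0
        (Matrix.diagonal fun i => (σ₂ i : ℂ)) * Qᴴ)
    (hR11 : IsUnit R₁₁)
    (hURV : A = U * Matrix.fromBlocks R₁₁ R₁₂ 0 R₂₂ * V) :
    let Sig₁ : Matrix (Fin r) (Fin r) ℂ := Matrix.diagonal fun i => (σ₁ i : ℂ)
    let Sig₂ : Matrix (Fin s) (Fin s) ℂ := Matrix.diagonal fun i => (σ₂ i : ℂ)
    let X := Qᴴ * Vᴴ
    IsUnit ((X.toBlocks₁₁)ᴴ * Sig₁ ^ 2 * X.toBlocks₁₁ +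
        (X.toBlocks₂₁)ᴴ * Sig₂ ^ 2 * X.toBlocks₂₁) →
      R₁₁⁻¹ * R₁₂ =
        ((X.toBlocks₁₁)ᴴ * Sig₁ ^ 2 * X.toBlocks₁₁ +
            (X.toBlocks₂₁)ᴴ * Sig₂ ^ 2 * X.toBlocks₂₁)⁻¹ *
          ((X.toBlocks₁₁)ᴴ * Sig₁ ^ 2 * X.toBlocks₁₂ +
            (X.toBlocks₂₁)ᴴ * Sig₂ ^ 2 * X.toBlocks₂₂) :=
  rurv_strong_rrqr_identity_general A P Q U V σ₁ σ₂ R₁₁ R₁₂ R₂₂ hP hU hV hSVD hR11 hURV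
end

section
/- Let X₁₁ be an invertible r×r complex matrix, X₁₂ an r×(n−r) matrix, X₂₁ an (n−r)×r matrix, and Σ₁, Σ₂ square matrices of sizes r×r and (n−r)×(n−r). Let W = X₂₁·X₁₁⁻¹. If X₁₁ᴴ·Σ₁²·X₁₁ + X₂₁ᴴ·Σ₂²·X₂₁ is invertible, then Σ₁² + Wᴴ·Σ₂²·W is invertible and (X₁₁ᴴ·Σ₁²·X₁₁ + X₂₁ᴴ·Σ₂²·X₂₁)⁻¹·X₁₁ᴴ·Σ₁²·X₁₂ = X₁₁⁻¹·(Σ₁² + Wᴴ·Σ₂²·W)⁻¹·Σ₁²·X₁₂. -/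
open Matrix

/-!
Since `W * X₁₁ = X₂₁`, the matrix `X₁₁ᴴ * Σ₁² * X₁₁ + X₂₁ᴴ * Σ₂² * X₂₁` is the congruence
`X₁₁ᴴ * (Σ₁² + Wᴴ * Σ₂² * W) * X₁₁`. Square matrices are Dedekind-finite, so the middle factor
of an invertible product is invertible, and inverting the product in reverse order cancels `X₁₁ᴴ`.
-/

theorem isUnit_of_isUnit_mul_mul {M : Type*} [Monoid M] [IsDedekindFiniteMonoid M] {a b c : M}
    (h : IsUnit (a * b * c)) : IsUnit b :=
  isUnit_of_mul_isUnit_right (isUnit_of_mul_isUnit_left h)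

namespace Matrix

variable {m n p : Type*} [Fintype n] [Fintype p] {α : Type*}

theorem conjTranspose_mul_add_mul_conjTranspose_mul_mul [Semiring α] [StarRing α]
    (A : Matrix n m α) (S : Matrix n n α) (W : Matrix p n α) (T : Matrix p p α) :
    Aᴴ * (S + Wᴴ * T * W) * A = Aᴴ * S * A + (W * A)ᴴ * T * (W * A) := by
  simp only [conjTranspose_mul, Matrix.mul_add, Matrix.add_mul, Matrix.mul_assoc]

variable [DecidableEq n] [CommRing α]

theorem inv_mul_mul_mul_cancel_left {A B : Matrix n n α} (M : Matrix n n α) (hB : IsUnit B) :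
    (B * M * A)⁻¹ * B = A⁻¹ * M⁻¹ := by
  rw [Matrix.mul_inv_rev, Matrix.mul_inv_rev, ← Matrix.mul_assoc,
    nonsing_inv_mul_cancel_right B _ ((isUnit_iff_isUnit_det B).mp hB)]

end Matrix

/-- Algebraic identity for the term `T₁` in the proof of the strong rank-revealing
property of RURV: with `W = X₂₁·X₁₁⁻¹` and `X₁₁ᴴ·Σ₁²·X₁₁ + X₂₁ᴴ·Σ₂²·X₂₁`
invertible, the matrix `Σ₁² + Wᴴ·Σ₂²·W` is invertible and
`(X₁₁ᴴ·Σ₁²·X₁₁ + X₂₁ᴴ·Σ₂²·X₂₁)⁻¹·X₁₁ᴴ·Σ₁²·X₁₂ = X₁₁⁻¹·(Σ₁² + Wᴴ·Σ₂²·W)⁻¹·Σ₁²·X₁₂`. -/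
theorem t1_identity {r s : ℕ}
    (X₁₁ : Matrix (Fin r) (Fin r) ℂ) (hX11 : IsUnit X₁₁)
    (X₁₂ : Matrix (Fin r) (Fin s) ℂ) (X₂₁ : Matrix (Fin s) (Fin r) ℂ)
    (Sig₁ : Matrix (Fin r) (Fin r) ℂ) (Sig₂ : Matrix (Fin s) (Fin s) ℂ)
    (hsum : IsUnit (X₁₁ᴴ * Sig₁ ^ 2 * X₁₁ + X₂₁ᴴ * Sig₂ ^ 2 * X₂₁)) :
    let W := X₂₁ * X₁₁⁻¹
    IsUnit (Sig₁ ^ 2 + Wᴴ * Sig₂ ^ 2 * W) ∧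
      (X₁₁ᴴ * Sig₁ ^ 2 * X₁₁ + X₂₁ᴴ * Sig₂ ^ 2 * X₂₁)⁻¹ * X₁₁ᴴ * Sig₁ ^ 2 * X₁₂ =
        X₁₁⁻¹ * (Sig₁ ^ 2 + Wᴴ * Sig₂ ^ 2 * W)⁻¹ * Sig₁ ^ 2 * X₁₂ := by
  intro W
  have hWX : W * X₁₁ = X₂₁ :=
    nonsing_inv_mul_cancel_right X₁₁ X₂₁ ((isUnit_iff_isUnit_det X₁₁).mp hX11)
  have hcongr : X₁₁ᴴ * (Sig₁ ^ 2 + Wᴴ * Sig₂ ^ 2 * W) * X₁₁ =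
      X₁₁ᴴ * Sig₁ ^ 2 * X₁₁ + X₂₁ᴴ * Sig₂ ^ 2 * X₂₁ := by
    rw [conjTranspose_mul_add_mul_conjTranspose_mul_mul, hWX]
  rw [← hcongr] at hsum ⊢
  refine ⟨isUnit_of_isUnit_mul_mul hsum, ?_⟩
  rw [inv_mul_mul_mul_cancel_left _ ((isUnit_conjTranspose X₁₁).mpr hX11)]
end
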